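/- There is no injective group homomorphism from the symmetric group S₅ = Perm(Fin 5) into the orthogonal group O(3,ℝ); equivalently, S₅ does not act faithfully and orthogonally on the 2-sphere. -/

import Mathlib

/-!
A 5-cycle `σ ∈ S₅` is conjugate to `σ²` and `σ³`, so its image `M` in `O(3)` satisfies
`t = tr M = tr M² = tr M³`, and `det M = 1` because `M⁵ = 1`. For a rotation `adj M = Mᵀ`,
so Newton's identity `tr M³ = t · tr M² - t · tr (adj M) + 3 det M` reads `t = 3`, and an
orthogonal matrix with trace 3 is the identity. So the 5-cycle lies in the kernel.
-/

namespace Matrix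

variable {n : Type*} [Fintype n] [DecidableEq n]

theorem trace_map_eq_of_isConj {G R : Type*} [Monoid G] [CommRing R] (f : G →* Matrix n n R)
    {g h : G} (hgh : IsConj g h) : (f g).trace = (f h).trace := by
  obtain ⟨c, hc⟩ := f.map_isConj hgh
  have hfh : f h = (c : Matrix n n R) * f g * (↑c⁻¹ : Matrix n n R) := by
    rw [hc.eq, mul_assoc, Units.mul_inv, mul_one]
  rw [hfh, trace_units_conj]

section OrthogonalGroup

variable {R : Type*} [CommRing R] {M : Matrix n n R}

theorem det_sq_eq_one_of_mem_orthogonalGroup (hM : M ∈ orthogonalGroup n R) :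
    M.det ^ 2 = 1 := by
  have := congrArg det ((mem_orthogonalGroup_iff n R).1 hM)
  rwa [det_mul, det_transpose, ← sq, det_one] at this

theorem det_eq_one_of_mem_orthogonalGroup_of_pow_eq_one (hM : M ∈ orthogonalGroup n R)
    {k : ℕ} (hk : Odd k) (hMk : M ^ k = 1) : M.det = 1 := by
  obtain ⟨j, rfl⟩ := hk
  have hdet : M.det ^ (2 * j + 1) = 1 := by rw [← det_pow, hMk, det_one]
  rwa [pow_succ, pow_mul, det_sq_eq_one_of_mem_orthogonalGroup hM, one_pow, one_mul] at hdet

theorem adjugate_eq_transpose_of_mem_orthogonalGroup (hM : M ∈ orthogonalGroup n R)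
    (hdet : M.det = 1) : M.adjugate = Mᵀ := by
  calc M.adjugate = M.adjugate * (M * Mᵀ) := by
        rw [(mem_orthogonalGroup_iff n R).1 hM, mul_one]
    _ = Mᵀ := by rw [← mul_assoc, adjugate_mul, hdet, one_smul, one_mul]

end OrthogonalGroup

/-- `‖M - 1‖² = trace ((M - 1)ᵀ (M - 1)) = 2 (card n - trace M)`. -/
theorem eq_one_of_mem_orthogonalGroup_of_trace_eq {M : Matrix n n ℝ}
    (hM : M ∈ orthogonalGroup n ℝ) (htr : M.trace = Fintype.card n) : M = 1 := by
  have hfrob : ((M - 1)ᴴ * (M - 1)).trace = 2 * (Fintype.card n - M.trace) := by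
    rw [conjTranspose_eq_transpose_of_trivial, transpose_sub, transpose_one, sub_mul, mul_sub,
      mul_sub, (mem_orthogonalGroup_iff' n ℝ).1 hM]
    simp only [mul_one, one_mul, trace_sub, trace_transpose, trace_one]
    ring
  rw [htr, sub_self, mul_zero, trace_conjTranspose_mul_self_eq_zero_iff] at hfrob
  exact sub_eq_zero.1 hfrob

theorem trace_pow_three_fin_three {R : Type*} [CommRing R] (M : Matrix (Fin 3) (Fin 3) R) :
    (M ^ 3).trace = M.trace * (M ^ 2).trace - M.adjugate.trace * M.trace + 3 * M.det := by
  simp only [pow_succ, pow_zero, one_mul, trace_fin_three, mul_apply, Fin.sum_univ_three,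
    adjugate_fin_three, det_fin_three, of_apply, cons_val', cons_val_zero, cons_val_one,
    cons_val_two, empty_val', cons_val_fin_one, head_cons, tail_cons, head_fin_const]
  ring

theorem eq_one_of_mem_orthogonalGroup_of_trace_pow_eq {M : Matrix (Fin 3) (Fin 3) ℝ}
    (hM : M ∈ orthogonalGroup (Fin 3) ℝ) (hdet : M.det = 1)
    (h2 : (M ^ 2).trace = M.trace) (h3 : (M ^ 3).trace = M.trace) : M = 1 := by
  have hnewton := trace_pow_three_fin_three M
  rw [h2, h3, adjugate_eq_transpose_of_mem_orthogonalGroup hM hdet, trace_transpose, hdet]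
    at hnewton
  refine eq_one_of_mem_orthogonalGroup_of_trace_eq hM ?_
  rw [Fintype.card_fin]
  push_cast
  linarith

end Matrix

/-- There is no injective group homomorphism from the symmetric group `S₅ = Perm (Fin 5)`
into the orthogonal group `O(3,ℝ)`. -/
theorem statement10 :
    ¬ ∃ f : Equiv.Perm (Fin 5) →* ↥(Matrix.orthogonalGroup (Fin 3) ℝ),
      Function.Injective f := by
  rintro ⟨f, hf⟩
  set σ : Equiv.Perm (Fin 5) := finRotate 5
  -- multiplication by 2 and by 3 on `ℤ/5` conjugate `x ↦ x + 1` to `x ↦ x + 2` and `x ↦ x + 3`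
  have hconj2 : IsConj σ (σ ^ 2) :=
    isConj_iff.2 ⟨⟨(2 * ·), (3 * ·), by decide, by decide⟩, by decide⟩
  have hconj3 : IsConj σ (σ ^ 3) :=
    isConj_iff.2 ⟨⟨(3 * ·), (2 * ·), by decide, by decide⟩, by decide⟩
  let φ := (Matrix.orthogonalGroup (Fin 3) ℝ).subtype.comp f
  have hM : φ σ ∈ Matrix.orthogonalGroup (Fin 3) ℝ := (f σ).2
  have hM5 : φ σ ^ 5 = 1 := by rw [← map_pow, show σ ^ 5 = 1 by decide, map_one]
  have hσ : φ σ = φ 1 := by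
    rw [map_one]
    refine Matrix.eq_one_of_mem_orthogonalGroup_of_trace_pow_eq hM
      (Matrix.det_eq_one_of_mem_orthogonalGroup_of_pow_eq_one hM (by decide) hM5) ?_ ?_
    · rw [← map_pow, Matrix.trace_map_eq_of_isConj φ hconj2]
    · rw [← map_pow, Matrix.trace_map_eq_of_isConj φ hconj3]
  exact absurd (hf (Subtype.ext hσ)) (by decide)
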